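/- arXiv:1811.10371 — 2 statements merged into one kernel-verified Lean document; each statement's English description precedes it below -/
import Mathlib

section
/- Let Θ₁, …, Θ_G ∈ ℂ^{N×N} be Hermitian positive semidefinite matrices with Θ_g Θ_{g'} = 0 for all g ≠ g', let c₁, …, c_G ≥ 0 and μ > 0, and set M = Σ_{g=1}^G c_g Θ_g + μ I_N. Then M is invertible, Θ_g M^{-1} Θ_{g'} = 0 for all g ≠ g', and in particular Tr( Θ_g M^{-1} Θ_{g'} M^{-1} ) = 0 for all g ≠ g'. -/
/-!
Orthogonality of the groups gives `Θ g * M = (c g • Θ g + μ • 1) * Θ g`. Both `M` and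
`c g • Θ g + μ • 1` are a positive semidefinite matrix plus `μ • 1`, hence positive definite and
invertible, so `Θ g * M⁻¹ = (c g • Θ g + μ • 1)⁻¹ * Θ g`, which is annihilated on the right by
`Θ g'` because `Θ g * Θ g' = 0`.
-/

open Matrix
open scoped ComplexOrder

variable {n ι : Type*} [DecidableEq n]

theorem Matrix.PosSemidef.posDef_add_smul_one {𝕜 : Type*} [RCLike 𝕜] {A : Matrix n n 𝕜}
    (hA : A.PosSemidef) {μ : 𝕜} (hμ : 0 < μ) : (A + μ • 1).PosDef :=
  PosDef.posSemidef_add hA (PosDef.one.smul hμ)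

variable [Fintype n]

theorem SemiconjBy.matrix_nonsing_inv {R : Type*} [CommRing R] {A X Y : Matrix n n R}
    (h : SemiconjBy A X Y) (hX : IsUnit X) (hY : IsUnit Y) : SemiconjBy A X⁻¹ Y⁻¹ := by
  obtain ⟨u, rfl⟩ := hX
  obtain ⟨v, rfl⟩ := hY
  rw [← coe_units_inv, ← coe_units_inv]
  exact h.units_inv_right

section Orthogonal

variable {R : Type*} [CommRing R] [Fintype ι] {Θ : ι → Matrix n n R}

theorem semiconjBy_sum_smul_add_smul_one (horth : Pairwise fun i j ↦ Θ i * Θ j = 0)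
    (c : ι → R) (μ : R) (g : ι) :
    SemiconjBy (Θ g) (∑ i, c i • Θ i + μ • 1) (c g • Θ g + μ • 1) := by
  have hsum : Θ g * ∑ i, c i • Θ i = c g • Θ g * Θ g := by
    rw [Finset.mul_sum, Finset.sum_eq_single g (fun i _ hi ↦ by
      rw [mul_smul_comm, horth hi.symm, smul_zero]) (by simp), mul_smul_comm, smul_mul_assoc]
  rw [SemiconjBy, mul_add, add_mul, hsum]
  simp only [mul_smul_comm, smul_mul_assoc, mul_one, one_mul]

theorem mul_nonsing_inv_sum_smul_add_smul_one_mul_eq_zero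
    (horth : Pairwise fun i j ↦ Θ i * Θ j = 0) (c : ι → R) (μ : R) {g g' : ι} (hgg' : g ≠ g')
    (hM : IsUnit (∑ i, c i • Θ i + μ • 1)) (hB : IsUnit (c g • Θ g + μ • 1)) :
    Θ g * (∑ i, c i • Θ i + μ • 1)⁻¹ * Θ g' = 0 := by
  rw [((semiconjBy_sum_smul_add_smul_one horth c μ g).matrix_nonsing_inv hM hB).eq,
    mul_assoc, horth hgg', mul_zero]

end Orthogonal

/-- **Vanishing cross-group coupling for orthogonal groups.**
Let `Θ₁, …, Θ_G ∈ ℂ^{N×N}` be Hermitian positive semidefinite with `Θ_g Θ_{g'} = 0` for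
`g ≠ g'`, let `c_g ≥ 0` and `μ > 0`, and set `M = Σ_g c_g Θ_g + μ I_N`. Then `M` is
invertible, `Θ_g M⁻¹ Θ_{g'} = 0` for `g ≠ g'`, and in particular
`Tr(Θ_g M⁻¹ Θ_{g'} M⁻¹) = 0` for `g ≠ g'`. -/
theorem stmt14 {N G : ℕ} (Θ : Fin G → Matrix (Fin N) (Fin N) ℂ)
    (hΘ : ∀ g, (Θ g).PosSemidef)
    (horth : ∀ g g', g ≠ g' → Θ g * Θ g' = 0)
    (c : Fin G → ℝ) (hc : ∀ g, 0 ≤ c g) (μ : ℝ) (hμ : 0 < μ) :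
    IsUnit (∑ g, (c g : ℂ) • Θ g + (μ : ℂ) • (1 : Matrix (Fin N) (Fin N) ℂ)).det ∧
    ∀ g g', g ≠ g' →
      Θ g * (∑ g'', (c g'' : ℂ) • Θ g'' + (μ : ℂ) • 1)⁻¹ * Θ g' = 0 ∧
      (Θ g * (∑ g'', (c g'' : ℂ) • Θ g'' + (μ : ℂ) • 1)⁻¹ * Θ g'
        * (∑ g'', (c g'' : ℂ) • Θ g'' + (μ : ℂ) • 1)⁻¹).trace = 0 := by
  have hc' : ∀ g, (0 : ℂ) ≤ c g := fun g ↦ Complex.zero_le_real.mpr (hc g)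
  have hμ' : (0 : ℂ) < μ := Complex.zero_lt_real.mpr hμ
  have hM : (∑ g, (c g : ℂ) • Θ g + (μ : ℂ) • 1).PosDef :=
    (posSemidef_sum _ fun g _ ↦ (hΘ g).smul (hc' g)).posDef_add_smul_one hμ'
  refine ⟨(isUnit_iff_isUnit_det _).mp hM.isUnit, fun g g' hgg' ↦ ?_⟩
  have hB := ((hΘ g).smul (hc' g)).posDef_add_smul_one hμ'
  have hzero := mul_nonsing_inv_sum_smul_add_smul_one_mul_eq_zero horth _ _ hgg' hM.isUnit
    hB.isUnit
  exact ⟨hzero, by rw [hzero, zero_mul, trace_zero]⟩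
end

section
/- Suppose positive reals ( η_{b,g} ), for b ∈ {1,…,L} and g ∈ 𝒜_b, satisfy η_{b,g} = (1/N) Tr( Θ_{b,g} T_{b,g} ) with T_{b,g} = ( (1/N) Σ_{j∈𝒢_{b,g}} γ_j a²_{b,j} Θ_{b,g} / ( a²_{b_j,j} η_{b_j,g_j} + γ_j a²_{b,j} η_{b,g} ) + μ_b I_N )^{-1}. Then the values m_{b,i} := a²_{b,i} η_{b,g(b,i)} constitute a solution of the full fixed-point system (FP). -/
open Matrix Finset
open scoped ComplexOrder

/-!
Fix a base station `b` and a group `g`. Since `Θ_g Θ_{g'} = 0` for `g' ≠ g`, left multiplication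
by `Θ_g` kills every summand of the full matrix `A = Σ_j c_j Θ_{g_j} + μ N I` outside group `g`,
so `Θ_g A = B Θ_g` for the group-only matrix `B = Σ_{j ∈ 𝒢_g} c_j Θ_g + μ N I`, which commutes
with `Θ_g`. Hence `Θ_g A⁻¹ = B⁻¹ Θ_g` and `Tr(Θ_g A⁻¹) = Tr(Θ_g B⁻¹)`. With `m = a² η` the
coefficients `c_j` are exactly those of the group equation, and `B = N T_{b,g}⁻¹`, so the full
equation for `m_{b,i}` is `a²_{b,i}` times the group equation for `η_{b,g}`.
-/

namespace Matrix

section CommRing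

variable {n R : Type*} [Fintype n] [DecidableEq n] [CommRing R]

theorem trace_mul_inv_eq_of_mul_eq_mul {A B X : Matrix n n R} (hA : IsUnit A) (hB : IsUnit B)
    (h : X * A = B * X) : trace (X * A⁻¹) = trace (X * B⁻¹) := by
  rw [isUnit_iff_isUnit_det] at hA hB
  have hX : X * A⁻¹ = B⁻¹ * X :=
    calc X * A⁻¹ = B⁻¹ * (B * X) * A⁻¹ := by rw [← Matrix.mul_assoc, nonsing_inv_mul _ hB, one_mul]
      _ = B⁻¹ * X := by rw [← h, Matrix.mul_assoc, Matrix.mul_assoc, mul_nonsing_inv _ hA, mul_one]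
  rw [hX, trace_mul_comm]

theorem mul_sum_smul_of_mul_eq_zero {ι G : Type*} [DecidableEq G] {Θ : G → Matrix n n R}
    (horth : ∀ g g', g ≠ g' → Θ g * Θ g' = 0) (f : ι → G) (c : ι → R) (s : Finset ι) (g : G) :
    Θ g * ∑ j ∈ s, c j • Θ (f j) = Θ g * ∑ j ∈ s with f j = g, c j • Θ g := by
  rw [sum_filter, Matrix.mul_sum, Matrix.mul_sum]
  refine sum_congr rfl fun j _ => ?_
  split_ifs with hj
  · rw [hj]
  · rw [mul_smul_comm, horth g (f j) (Ne.symm hj), smul_zero, Matrix.mul_zero]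

theorem trace_mul_inv_sum_smul_add_smul_one {ι G : Type*} [DecidableEq G] {Θ : G → Matrix n n R}
    (horth : ∀ g g', g ≠ g' → Θ g * Θ g' = 0) (f : ι → G) (c : ι → R) (s : Finset ι) (ν : R)
    (g : G) (hA : IsUnit (∑ j ∈ s, c j • Θ (f j) + ν • 1))
    (hB : IsUnit (∑ j ∈ s with f j = g, c j • Θ g + ν • 1)) :
    trace (Θ g * (∑ j ∈ s, c j • Θ (f j) + ν • 1)⁻¹) =
      trace (Θ g * (∑ j ∈ s with f j = g, c j • Θ g + ν • 1)⁻¹) := by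
  refine trace_mul_inv_eq_of_mul_eq_mul hA hB ?_
  have hcomm : Commute (Θ g) (∑ j ∈ s with f j = g, c j • Θ g + ν • 1) :=
    (Commute.sum_right _ _ _ fun j _ => (Commute.refl _).smul_right _).add_right
      ((Commute.one_right _).smul_right _)
  rw [Matrix.mul_add, mul_sum_smul_of_mul_eq_zero horth, ← Matrix.mul_add, hcomm.eq]

end CommRing

variable {n ι G : Type*} [DecidableEq n]

theorem posDef_sum_smul_add_smul_one (s : Finset ι) {c : ι → ℂ} (hc : ∀ i ∈ s, 0 ≤ c i)
    {P : ι → Matrix n n ℂ} (hP : ∀ i ∈ s, (P i).PosSemidef) {ν : ℂ} (hν : 0 < ν) :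
    (∑ i ∈ s, c i • P i + ν • 1).PosDef :=
  PosDef.posSemidef_add (posSemidef_sum s fun i hi => (hP i hi).smul (hc i hi)) (PosDef.one.smul hν)

theorem trace_mul_inv_sum_smul_add_smul_one_eq_group [Fintype n] [DecidableEq G]
    {Θ : G → Matrix n n ℂ}
    (hΘ : ∀ g, (Θ g).PosSemidef) (horth : ∀ g g', g ≠ g' → Θ g * Θ g' = 0) (f : ι → G)
    {c : ι → ℝ} (hc : ∀ j, 0 ≤ c j) (s : Finset ι) {μ t : ℝ} (hμ : 0 < μ) (ht : 0 < t) (g : G) :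
    trace (Θ g * (∑ j ∈ s, (c j : ℂ) • Θ (f j) + ((μ * t : ℝ) : ℂ) • 1)⁻¹) =
      (t : ℂ)⁻¹ * trace (Θ g *
        (((1 / t : ℝ) : ℂ) • ∑ j ∈ s with f j = g, (c j : ℂ) • Θ g + (μ : ℂ) • 1)⁻¹) := by
  set S := ∑ j ∈ s with f j = g, (c j : ℂ) • Θ g
  have hc' : ∀ j ∈ s, 0 ≤ (c j : ℂ) := fun j _ => Complex.zero_le_real.2 (hc j)
  have hμt : (0 : ℂ) < ((μ * t : ℝ) : ℂ) := Complex.zero_lt_real.2 (mul_pos hμ ht)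
  have hA := posDef_sum_smul_add_smul_one s hc' (fun j _ => hΘ (f j)) hμt
  have hB := posDef_sum_smul_add_smul_one (s.filter fun j => f j = g)
    (fun j hj => hc' j (mem_filter.1 hj).1) (fun _ _ => hΘ g) hμt
  set D := ((1 / t : ℝ) : ℂ) • S + (μ : ℂ) • 1
  have hD : D.PosDef := PosDef.posSemidef_add
    ((posSemidef_sum _ fun j hj => (hΘ g).smul (hc' j (mem_filter.1 hj).1)).smul
      (Complex.zero_le_real.2 (by positivity))) (PosDef.one.smul (Complex.zero_lt_real.2 hμ))
  have hscale : (t : ℂ) • D = S + ((μ * t : ℝ) : ℂ) • 1 := by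
    rw [smul_add, smul_smul, smul_smul, ← Complex.ofReal_mul, ← Complex.ofReal_mul,
      mul_one_div_cancel ht.ne', Complex.ofReal_one, one_smul, mul_comm]
  have : Invertible (t : ℂ) := invertibleOfNonzero (Complex.ofReal_ne_zero.2 ht.ne')
  rw [trace_mul_inv_sum_smul_add_smul_one horth f _ s _ g hA.isUnit hB.isUnit, ← hscale,
    inv_smul D _ ((isUnit_iff_isUnit_det D).1 hD.isUnit), Matrix.mul_smul, trace_smul,
    invOf_eq_inv, smul_eq_mul]

end Matrix

theorem stmt15_general {L K N : ℕ} {Gt : Type*} [DecidableEq Gt]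
    (bk : Fin K → Fin L) (gA : Fin L → Fin K → Gt)
    (Θ : Fin L → Gt → Matrix (Fin N) (Fin N) ℂ)
    (hΘ : ∀ b g, (Θ b g).PosSemidef)
    (horth : ∀ b g g', g ≠ g' → Θ b g * Θ b g' = 0)
    (a : Fin L → Fin K → ℝ)
    (γ : Fin K → ℝ) (hγ : ∀ k, 0 < γ k) (μ : Fin L → ℝ) (hμ : ∀ b, 0 < μ b)
    (η : Fin L → Gt → ℝ)
    (hηpos : ∀ (b : Fin L) (j : Fin K), 0 < η b (gA b j))
    (hηeq : ∀ (b : Fin L) (j : Fin K),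
      η b (gA b j) = (1 / (N : ℝ)) *
        (Matrix.trace (Θ b (gA b j) *
          ((((1 : ℝ) / (N : ℝ) : ℝ) : ℂ) •
            (∑ j' ∈ Finset.univ.filter (fun j' => gA b j' = gA b j),
              ((γ j' * a b j' ^ 2 /
                  (a (bk j') j' ^ 2 * η (bk j') (gA (bk j') j') +
                    γ j' * a b j' ^ 2 * η b (gA b j)) : ℝ) : ℂ) • Θ b (gA b j)) +
            ((μ b : ℝ) : ℂ) • (1 : Matrix (Fin N) (Fin N) ℂ))⁻¹)).re) :
    ∀ (b : Fin L) (i : Fin K),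
      a b i ^ 2 * η b (gA b i) =
        (Matrix.trace (((a b i ^ 2 : ℝ) : ℂ) • Θ b (gA b i) *
          ((∑ j, ((γ j * a b j ^ 2 /
              ((a (bk j) j ^ 2 * η (bk j) (gA (bk j) j)) +
                γ j * (a b j ^ 2 * η b (gA b j))) : ℝ) : ℂ) • Θ b (gA b j)) +
            ((μ b * (N : ℝ) : ℝ) : ℂ) • (1 : Matrix (Fin N) (Fin N) ℂ))⁻¹)).re := by
  intro b i
  have hN : (0 : ℝ) < N := by
    refine Nat.cast_pos.2 (Nat.pos_of_ne_zero fun hN => (hηpos b i).ne' ?_)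
    simpa [hN] using hηeq b i
  set c : Fin K → ℝ := fun j => γ j * a b j ^ 2 /
    (a (bk j) j ^ 2 * η (bk j) (gA (bk j) j) + γ j * (a b j ^ 2 * η b (gA b j)))
  have hc : ∀ j, 0 ≤ c j := fun j => by
    have := hγ j; have := hηpos b j; have := hηpos (bk j) j
    positivity
  have hgroup : ∑ j with gA b j = gA b i, ((γ j * a b j ^ 2 / (a (bk j) j ^ 2 *
      η (bk j) (gA (bk j) j) + γ j * a b j ^ 2 * η b (gA b i)) : ℝ) : ℂ) • Θ b (gA b i) =
      ∑ j with gA b j = gA b i, (c j : ℂ) • Θ b (gA b i) :=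
    sum_congr rfl fun j hj => by simp only [c, (mem_filter.1 hj).2, mul_assoc]
  rw [Matrix.smul_mul, trace_smul, trace_mul_inv_sum_smul_add_smul_one_eq_group (hΘ b) (horth b)
    (gA b) hc univ (hμ b) hN, hηeq b i, hgroup, smul_eq_mul, ← Complex.ofReal_inv,
    Complex.re_ofReal_mul, Complex.re_ofReal_mul, one_div]

/-- **Group-specific fixed points solve the full system (grouped users).**
If positive reals `η_{b,g}` (for each BS `b` and each group `g ∈ 𝒜_b`, i.e. each group in
the range of the assignment `gA b`) satisfy
`η_{b,g} = (1/N) Tr( Θ_{b,g} T_{b,g} )` with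
`T_{b,g} = ( (1/N) Σ_{j∈𝒢_{b,g}} γ_j a²_{b,j} Θ_{b,g} / (a²_{b_j,j} η_{b_j,g_j} + γ_j a²_{b,j} η_{b,g}) + μ_b I_N )⁻¹`,
then `m_{b,i} := a²_{b,i} η_{b,g(b,i)}` solves the full fixed-point system (FP):
`m_{b,i} = Tr( a²_{b,i} Θ_{b,g(b,i)} ( Σ_j γ_j a²_{b,j} Θ_{b,g(b,j)} / (m_{b_j,j} + γ_j m_{b,j}) + μ_b N I_N )⁻¹ )`. -/
theorem stmt15 {L K N : ℕ} {Gt : Type*} [Fintype Gt] [DecidableEq Gt]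
    (bk : Fin K → Fin L) (gA : Fin L → Fin K → Gt)
    (Θ : Fin L → Gt → Matrix (Fin N) (Fin N) ℂ)
    (hΘ : ∀ b g, (Θ b g).PosSemidef) (hΘne : ∀ b g, Θ b g ≠ 0)
    (horth : ∀ b g g', g ≠ g' → Θ b g * Θ b g' = 0)
    (a : Fin L → Fin K → ℝ) (ha : ∀ b k, 0 < a b k)
    (γ : Fin K → ℝ) (hγ : ∀ k, 0 < γ k) (μ : Fin L → ℝ) (hμ : ∀ b, 0 < μ b)
    (η : Fin L → Gt → ℝ)
    (hηpos : ∀ (b : Fin L) (j : Fin K), 0 < η b (gA b j))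
    (hηeq : ∀ (b : Fin L) (j : Fin K),
      η b (gA b j) = (1 / (N : ℝ)) *
        (Matrix.trace (Θ b (gA b j) *
          ((((1 : ℝ) / (N : ℝ) : ℝ) : ℂ) •
            (∑ j' ∈ Finset.univ.filter (fun j' => gA b j' = gA b j),
              ((γ j' * a b j' ^ 2 /
                  (a (bk j') j' ^ 2 * η (bk j') (gA (bk j') j') +
                    γ j' * a b j' ^ 2 * η b (gA b j)) : ℝ) : ℂ) • Θ b (gA b j)) +
            ((μ b : ℝ) : ℂ) • (1 : Matrix (Fin N) (Fin N) ℂ))⁻¹)).re) :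
    ∀ (b : Fin L) (i : Fin K),
      a b i ^ 2 * η b (gA b i) =
        (Matrix.trace (((a b i ^ 2 : ℝ) : ℂ) • Θ b (gA b i) *
          ((∑ j, ((γ j * a b j ^ 2 /
              ((a (bk j) j ^ 2 * η (bk j) (gA (bk j) j)) +
                γ j * (a b j ^ 2 * η b (gA b j))) : ℝ) : ℂ) • Θ b (gA b j)) +
            ((μ b * (N : ℝ) : ℝ) : ℂ) • (1 : Matrix (Fin N) (Fin N) ℂ))⁻¹)).re :=
  stmt15_general bk gA Θ hΘ horth a γ hγ μ hμ η hηpos hηeq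
end
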